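/- arXiv:1911.01043 — 5 statements merged into one kernel-verified Lean document; each statement's English description precedes it below -/
import Mathlib

section
/- Let W ∈ ℝ^{m×r}, V ∈ ℝ^{r×n} and b ∈ ℝʳ. For k ∈ {1,…,r} let W_k denote the k-th column of W, and let V_k and b_k denote the k-th row of V and the k-th entry of b. Let N = sup_{x ∈ ℝⁿ} #{ k : V_k x + b_k > 0 } be the maximum number of hidden nodes activated by a single input. Then the two-layer ReLU network f(x) = W (V x + b)_+ is Lipschitz continuous with respect to the Euclidean norms, with Lipschitz constant at most N · max_{k ∈ [r]} ‖W_k‖₂ ‖V_k‖₂. -/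
/-!
Restrict the network to the segment `s ↦ y + s • (x - y)`, `s ∈ [0, 1]`. Every pre-activation is
affine in `s`, so the restriction is a sum of terms `max (a k + s * c k) 0 • W_k` and has a right
derivative everywhere: the sum of `c k • W_k` over the units that are active just to the right of
`s`. These units are all active at one input, so there are at most `N` of them, and by
Cauchy–Schwarz `|c k| ‖W_k‖ ≤ ‖W_k‖ ‖V_k‖ ‖x - y‖`. The mean value inequality for right
derivatives then gives the bound.
-/

open Matrix

noncomputable def en {n : ℕ} (v : Fin n → ℝ) : ℝ := Real.sqrt (∑ i, (v i) ^ 2)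

open Set Filter Topology Finset

/-- The unit with pre-activation `a + s * c` is active for all `s` slightly larger than `t`. -/
def RightActive (a c t : ℝ) : Prop := 0 < a + t * c ∨ (a + t * c = 0 ∧ 0 < c)

noncomputable instance (a c t : ℝ) : Decidable (RightActive a c t) :=
  inferInstanceAs (Decidable (_ ∨ _))

section RightActive

variable {a c t : ℝ}

lemma RightActive.eventually_pos (h : RightActive a c t) : ∀ᶠ s in 𝓝[>] t, 0 < a + s * c := by
  rcases h with hpos | ⟨hzero, hc⟩
  · have hcont : Continuous fun s : ℝ => a + s * c := by fun_prop
    exact (hcont.continuousAt.eventually_const_lt hpos).filter_mono nhdsWithin_le_nhds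
  · filter_upwards [self_mem_nhdsWithin] with s (hs : t < s)
    nlinarith

lemma RightActive.eventually_nonneg (h : RightActive a c t) :
    ∀ᶠ s in 𝓝[≥] t, 0 ≤ a + s * c := by
  rcases h with hpos | ⟨hzero, hc⟩
  · have hcont : Continuous fun s : ℝ => a + s * c := by fun_prop
    exact (hcont.continuousAt.eventually_const_le hpos).filter_mono nhdsWithin_le_nhds
  · filter_upwards [self_mem_nhdsWithin] with s (hs : t ≤ s)
    nlinarith

lemma eventually_nonpos_of_not_rightActive (h : ¬RightActive a c t) :
    ∀ᶠ s in 𝓝[≥] t, a + s * c ≤ 0 := by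
  simp only [RightActive, not_or, not_and, not_lt] at h
  obtain ⟨hle, hc⟩ := h
  rcases hle.lt_or_eq with hneg | hzero
  · have hcont : Continuous fun s : ℝ => a + s * c := by fun_prop
    exact (hcont.continuousAt.eventually_le_const hneg).filter_mono nhdsWithin_le_nhds
  · filter_upwards [self_mem_nhdsWithin] with s (hs : t ≤ s)
    nlinarith [hc hzero]

lemma hasDerivWithinAt_max_affine_zero (a c t : ℝ) :
    HasDerivWithinAt (fun s => max (a + s * c) 0) (if RightActive a c t then c else 0)
      (Ici t) t := by
  by_cases h : RightActive a c t
  · rw [if_pos h]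
    have affine : HasDerivWithinAt (fun s => a + s * c) c (Ici t) t := by
      simpa using ((hasDerivAt_id t).mul_const c).const_add a |>.hasDerivWithinAt
    refine affine.congr_of_eventuallyEq_of_mem ?_ self_mem_Ici
    filter_upwards [h.eventually_nonneg] with s hs using max_eq_left hs
  · rw [if_neg h]
    refine (hasDerivWithinAt_const t _ 0).congr_of_eventuallyEq_of_mem ?_ self_mem_Ici
    filter_upwards [eventually_nonpos_of_not_rightActive h] with s hs using max_eq_right hs

end RightActive

section ReluLine

variable {ι E : Type*} [Fintype ι] [NormedAddCommGroup E] [NormedSpace ℝ E]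

/-- The network `x ↦ W (V x + b)₊` on the line `s ↦ y + s • d`, with `a = V y + b`, `c = V d` and
`w k` the `k`-th column of `W` (see `reluLine_eq_toLp`). -/
noncomputable def reluLine (a c : ι → ℝ) (w : ι → E) (s : ℝ) : E :=
  ∑ k, max (a k + s * c k) 0 • w k

variable (a c : ι → ℝ) (w : ι → E)

lemma continuous_reluLine : Continuous (reluLine a c w) := by
  unfold reluLine
  fun_prop

lemma hasDerivWithinAt_reluLine (t : ℝ) :
    HasDerivWithinAt (reluLine a c w) (∑ k with RightActive (a k) (c k) t, c k • w k)
      (Ici t) t := by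
  unfold reluLine
  have h := HasDerivWithinAt.fun_sum (u := univ) fun k _ =>
    (hasDerivWithinAt_max_affine_zero (a k) (c k) t).smul_const (w k)
  simpa only [ite_smul, zero_smul, ← sum_filter] using h

lemma card_rightActive_le {N : ℕ} (hN : ∀ s : ℝ, #{k | 0 < a k + s * c k} ≤ N) (t : ℝ) :
    #{k | RightActive (a k) (c k) t} ≤ N := by
  obtain ⟨s, hs⟩ := ((eventually_all_finset {k | RightActive (a k) (c k) t}).mpr
    fun k hk => RightActive.eventually_pos (mem_filter.mp hk).2).exists
  exact (Finset.card_le_card fun k hk => mem_filter.mpr ⟨mem_univ k, hs k hk⟩).trans (hN s)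

theorem norm_reluLine_sub_le {N : ℕ} {L : ℝ} (hN : ∀ s : ℝ, #{k | 0 < a k + s * c k} ≤ N)
    (hL : ∀ k, |c k| * ‖w k‖ ≤ L) (hL0 : 0 ≤ L) {u v : ℝ} (huv : u ≤ v) :
    ‖reluLine a c w v - reluLine a c w u‖ ≤ N * L * (v - u) := by
  refine norm_image_sub_le_of_norm_deriv_right_le_segment (continuous_reluLine a c w).continuousOn
    (fun t _ => hasDerivWithinAt_reluLine a c w t) (fun t _ => ?_) v ⟨huv, le_rfl⟩
  calc ‖∑ k with RightActive (a k) (c k) t, c k • w k‖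
      ≤ #{k | RightActive (a k) (c k) t} * L := by
        refine (norm_sum_le_of_le _ fun k _ => ?_).trans (by rw [sum_const, nsmul_eq_mul])
        rw [norm_smul, Real.norm_eq_abs]
        exact hL k
    _ ≤ N * L := by gcongr; exact_mod_cast card_rightActive_le a c hN t

end ReluLine

section Network

lemma en_eq_norm {n : ℕ} (v : Fin n → ℝ) : en v = ‖WithLp.toLp 2 v‖ := by
  simp [en, EuclideanSpace.norm_eq]

lemma en_nonneg {n : ℕ} (v : Fin n → ℝ) : 0 ≤ en v := Real.sqrt_nonneg _

lemma abs_dotProduct_le_en_mul_en {n : ℕ} (u v : Fin n → ℝ) : |u ⬝ᵥ v| ≤ en u * en v := by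
  rw [en, en, ← Real.sqrt_mul (sum_nonneg fun i _ => sq_nonneg _)]
  exact Real.abs_le_sqrt (sum_mul_sq_le_sq_mul_sq _ _ _)

variable {m ι : Type*} [Fintype ι]

lemma toLp_mulVec (W : Matrix m ι ℝ) (h : ι → ℝ) :
    WithLp.toLp 2 (W *ᵥ h) = ∑ k, h k • WithLp.toLp 2 (fun i => W i k) := by
  ext i
  simp [mulVec, dotProduct, mul_comm]

lemma reluLine_eq_toLp [Fintype m] {n : Type*} [Fintype n] (W : Matrix m ι ℝ) (V : Matrix ι n ℝ)
    (b : ι → ℝ) (y d : n → ℝ) (s : ℝ) :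
    reluLine (V *ᵥ y + b) (V *ᵥ d) (fun k => WithLp.toLp 2 (fun i => W i k)) s =
      WithLp.toLp 2 (W *ᵥ fun k => max ((V *ᵥ (y + s • d)) k + b k) 0) := by
  simp [reluLine, toLp_mulVec, mulVec_add, mulVec_smul, add_right_comm]

end Network

/-- A two-layer ReLU network `f x = W (V x + b)₊` is Lipschitz (w.r.t.
Euclidean norms) with constant at most `N · max_k ‖W_k‖₂ ‖V_k‖₂`, where `N` is the maximum
number of hidden nodes activated by a single input, `W_k` is the k-th column of `W` and
`V_k` the k-th row of `V`. -/
theorem stmt1 {m r n : ℕ} (hr : 0 < r)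
    (W : Matrix (Fin m) (Fin r) ℝ) (V : Matrix (Fin r) (Fin n) ℝ) (b : Fin r → ℝ)
    (f : (Fin n → ℝ) → (Fin m → ℝ))
    (hf : ∀ x, f x = W.mulVec (fun k => max (V.mulVec x k + b k) 0))
    (N : ℕ)
    (hN : N = ⨆ x : Fin n → ℝ, (Finset.univ.filter (fun k => 0 < V.mulVec x k + b k)).card) :
    ∀ x y : Fin n → ℝ,
      en (f x - f y) ≤
        (N : ℝ) *
          (Finset.univ.sup' ⟨⟨0, hr⟩, Finset.mem_univ _⟩
            (fun k : Fin r => en (fun i => W i k) * en (V k))) *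
          en (x - y) := by
  intro x y
  set M := univ.sup' ⟨⟨0, hr⟩, mem_univ _⟩ fun k : Fin r => en (fun i => W i k) * en (V k)
  have hM : ∀ k, en (fun i => W i k) * en (V k) ≤ M := fun k =>
    le_sup' (fun k : Fin r => en (fun i => W i k) * en (V k)) (mem_univ k)
  have hM0 : 0 ≤ M := (mul_nonneg (en_nonneg _) (en_nonneg _)).trans (hM ⟨0, hr⟩)
  have hcount : ∀ z, #{k | 0 < (V *ᵥ z) k + b k} ≤ N := fun z => by
    rw [hN]
    refine le_ciSup (f := fun z => #{k | 0 < (V *ᵥ z) k + b k}) ⟨r, ?_⟩ z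
    rintro _ ⟨z', rfl⟩
    exact (card_filter_le _ _).trans (card_fin r).le
  have hline : ∀ s : ℝ, #{k | 0 < (V *ᵥ y + b) k + s * (V *ᵥ (x - y)) k} ≤ N := fun s => by
    simpa [mulVec_add, mulVec_smul, add_right_comm] using hcount (y + s • (x - y))
  have hweights : ∀ k, |(V *ᵥ (x - y)) k| * ‖WithLp.toLp 2 (fun i => W i k)‖ ≤ M * en (x - y) :=
    fun k => calc
      _ ≤ en (V k) * en (x - y) * en (fun i => W i k) := by
        rw [← en_eq_norm]
        exact mul_le_mul_of_nonneg_right (abs_dotProduct_le_en_mul_en _ _) (en_nonneg _)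
      _ ≤ M * en (x - y) := by nlinarith [hM k, en_nonneg (x - y)]
  have key := norm_reluLine_sub_le _ _ _ hline hweights (mul_nonneg hM0 (en_nonneg _)) zero_le_one
  simp only [reluLine_eq_toLp, ← hf, zero_smul, add_zero, one_smul, add_sub_cancel, sub_zero,
    mul_one] at key
  rwa [en_eq_norm, WithLp.toLp_sub, mul_assoc]
end

section
/- Under hypotheses (a)–(d) of the stationarity representation — w̄ = Σ_s σ_s μ_s G_s (V̄ x_s + b̄), V̄ = Σ_s σ_s μ_s G_s w̄ x_sᵀ, b̄ = Σ_s σ_s μ_s G_s w̄ with μ_s ≥ 0, σ_s ∈ {+1, −1}, G_s the diagonal 0/1 activation matrix of x_s, and σ_s · w̄ᵀ (V̄ x_s + b̄)_+ = 1 for all s — the following identities hold: for every k ∈ [r], w̄_k² = ‖V̄_k‖₂² + b̄_k², and Σ_{k∈[r]} w̄_k² = Σ_{s∈S} μ_s. -/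
/-!
At node `k`, (b) and (c) say `(V̄_k, b̄_k) = w̄_k Σ_s c_s (x_s, 1)` with the gated multipliers
`c_s = σ_s μ_s (G_s)_kk`, while (a) says `w̄_k = Σ_s c_s (V̄_k x_s + b̄_k)`; pairing
`(V̄_k, b̄_k)` with itself therefore gives `w̄_k²`. Multiplying (a) by `w̄_k`, summing over `k`
and exchanging the sums gives `Σ_k w̄_k² = Σ_s μ_s σ_s w̄ᵀ(V̄ x_s + b̄)_+`, which is `Σ_s μ_s`
by (d).
-/

open Matrix

theorem ite_pos_self_eq_max_zero {α : Type*} [LinearOrder α] [Zero α] (t : α) :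
    (if 0 < t then t else 0) = max t 0 := by
  split_ifs with h
  · exact (max_eq_left h.le).symm
  · exact (max_eq_right (not_lt.mp h)).symm

theorem sq_eq_dotProduct_self_add_sq {ι m : Type*} [Fintype ι] [Fintype m]
    (c : ι → ℝ) (x : ι → m → ℝ) (v : m → ℝ) (w β : ℝ)
    (hw : w = ∑ s, c s * (v ⬝ᵥ x s + β))
    (hv : ∀ a, v a = ∑ s, c s * w * x s a) (hβ : β = ∑ s, c s * w) :
    w ^ 2 = v ⬝ᵥ v + β ^ 2 := by
  have hv' : v = ∑ s, (c s * w) • x s := by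
    ext a
    simp [hv, Finset.sum_apply]
  calc w ^ 2 = w * ∑ s, c s * (v ⬝ᵥ x s + β) := by rw [sq, ← hw]
    _ = v ⬝ᵥ (∑ s, (c s * w) • x s) + β * ∑ s, c s * w := by
      simp only [dotProduct_sum, dotProduct_smul, smul_eq_mul, Finset.mul_sum,
        ← Finset.sum_add_distrib]
      exact Finset.sum_congr rfl fun s _ => by ring
    _ = v ⬝ᵥ v + β ^ 2 := by rw [← hv', ← hβ, sq]

theorem sum_sq_eq_sum_of_margin {κ ι : Type*} [Fintype κ] [Fintype ι]
    (w : κ → ℝ) (z : κ → ι → ℝ) (σ μ : ι → ℝ)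
    (hw : ∀ k, w k = ∑ s, σ s * μ s * z k s) (hmargin : ∀ s, σ s * ∑ k, w k * z k s = 1) :
    ∑ k, w k ^ 2 = ∑ s, μ s :=
  calc ∑ k, w k ^ 2 = ∑ k, w k * ∑ s, σ s * μ s * z k s :=
        Finset.sum_congr rfl fun k _ => by rw [sq, ← hw]
    _ = ∑ s, μ s * (σ s * ∑ k, w k * z k s) := by
      simp only [Finset.mul_sum]
      rw [Finset.sum_comm]
      exact Finset.sum_congr rfl fun s _ => Finset.sum_congr rfl fun k _ => by ring
    _ = ∑ s, μ s := by simp only [hmargin, mul_one]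

theorem stmt8_general {r n : ℕ} {ι : Type*} [Fintype ι]
    (wb : Fin r → ℝ) (Vb : Matrix (Fin r) (Fin n) ℝ) (bb : Fin r → ℝ)
    (x : ι → Fin n → ℝ) (σ : ι → ℝ)
    (μ : ι → ℝ)
    -- (a)
    (ha : ∀ k, wb k =
      ∑ s, σ s * μ s * (if 0 < Vb k ⬝ᵥ x s + bb k then Vb k ⬝ᵥ x s + bb k else 0))
    -- (b)
    (hbV : ∀ k a, Vb k a =
      ∑ s, σ s * μ s * (if 0 < Vb k ⬝ᵥ x s + bb k then wb k else 0) * x s a)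
    -- (c)
    (hcb : ∀ k, bb k = ∑ s, σ s * μ s * (if 0 < Vb k ⬝ᵥ x s + bb k then wb k else 0))
    -- (d)
    (hd : ∀ s, σ s * (∑ k, wb k * max (Vb k ⬝ᵥ x s + bb k) 0) = 1) :
    (∀ k, (wb k) ^ 2 = (∑ a, (Vb k a) ^ 2) + (bb k) ^ 2) ∧
    (∑ k, (wb k) ^ 2) = ∑ s, μ s := by
  refine ⟨fun k => ?_, ?_⟩
  · have hnode := sq_eq_dotProduct_self_add_sq
      (fun s => σ s * μ s * if 0 < Vb k ⬝ᵥ x s + bb k then 1 else 0) x (Vb k) (wb k) (bb k)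
      (by simpa only [mul_assoc, boole_mul] using ha k)
      (fun a => by simpa only [mul_assoc, boole_mul] using hbV k a)
      (by simpa only [mul_assoc, boole_mul] using hcb k)
    simpa only [dotProduct, sq] using hnode
  · exact sum_sq_eq_sum_of_margin wb (fun k s => max (Vb k ⬝ᵥ x s + bb k) 0) σ μ
      (fun k => by simpa only [ite_pos_self_eq_max_zero] using ha k) hd

/-- Under the stationarity representation (a)–(c) with nonnegative
multipliers, ±1 labels and the support-vector condition (d), one has the per-node norm
balance `w̄_k² = ‖V̄_k‖₂² + b̄_k²` for every `k`, and `Σ_k w̄_k² = Σ_s μ_s`. -/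
theorem stmt8 {r n : ℕ} {ι : Type*} [Fintype ι]
    (wb : Fin r → ℝ) (Vb : Matrix (Fin r) (Fin n) ℝ) (bb : Fin r → ℝ)
    (x : ι → Fin n → ℝ) (σ : ι → ℝ) (hσ : ∀ s, σ s = 1 ∨ σ s = -1)
    (μ : ι → ℝ) (hμ : ∀ s, 0 ≤ μ s)
    -- (a)
    (ha : ∀ k, wb k =
      ∑ s, σ s * μ s * (if 0 < Vb k ⬝ᵥ x s + bb k then Vb k ⬝ᵥ x s + bb k else 0))
    -- (b)
    (hbV : ∀ k a, Vb k a =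
      ∑ s, σ s * μ s * (if 0 < Vb k ⬝ᵥ x s + bb k then wb k else 0) * x s a)
    -- (c)
    (hcb : ∀ k, bb k = ∑ s, σ s * μ s * (if 0 < Vb k ⬝ᵥ x s + bb k then wb k else 0))
    -- (d)
    (hd : ∀ s, σ s * (∑ k, wb k * max (Vb k ⬝ᵥ x s + bb k) 0) = 1) :
    (∀ k, (wb k) ^ 2 = (∑ a, (Vb k a) ^ 2) + (bb k) ^ 2) ∧
    (∑ k, (wb k) ^ 2) = ∑ s, μ s :=
  stmt8_general wb Vb bb x σ μ ha hbV hcb hd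
end

section
/- Fix finite sets {x_i}_{i∈I} and {x_j}_{j∈J} in ℝⁿ and fixed diagonal matrices G_s ∈ {0,1}^{r×r} for s ∈ I ∪ J, and define ℓ(w, V, b) = Σ_{i∈I} log(1 + exp(−wᵀ G_i (V x_i + b))) + Σ_{j∈J} log(1 + exp(wᵀ G_j (V x_j + b))) for w ∈ ℝʳ, V ∈ ℝ^{r×n}, b ∈ ℝʳ. If (w(t), V(t), b(t)), t ≥ 0, is a solution of the gradient flow dw/dt = −∇_w ℓ, dV/dt = −∇_V ℓ, db/dt = −∇_b ℓ, then ‖w(t)‖₂² − ‖V(t)‖_F² − ‖b(t)‖₂² = ‖w(0)‖₂² − ‖V(0)‖_F² − ‖b(0)‖₂² for all t ≥ 0. -/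
/-!
Each sample enters the loss only through the network output `z = wᵀ G (V x + b)`, which is linear
in `w` and linear in the pair `(V, b)`. Writing `ℓ = L ∘ z` and differentiating along the rays
`w + t w`, `V + t V`, `b + t b` gives `⟨∇_w ℓ, w⟩ = DL(z) z = DL(z) z_V + DL(z) z_b =
⟨∇_V ℓ, V⟩ + ⟨∇_b ℓ, b⟩`, where `z_V`, `z_b` are the contributions of `V` and `b` to `z`.
Along the gradient flow `d/dt ‖w‖² = -2 ⟨∇_w ℓ, w⟩`, and likewise for `V` and `b`, so the
derivative of `‖w‖² - ‖V‖_F² - ‖b‖²` vanishes.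
-/

open Finset

theorem fderiv_apply_eq_of_add_smul_eq {E F G : Type*}
    [NormedAddCommGroup E] [NormedSpace ℝ E] [NormedAddCommGroup F] [NormedSpace ℝ F]
    [NormedAddCommGroup G] [NormedSpace ℝ G] {f : E → G} {L : F → G} {u v : E} {z d : F}
    (hf : DifferentiableAt ℝ f u) (hL : DifferentiableAt ℝ L z)
    (h : ∀ t : ℝ, f (u + t • v) = L (z + t • d)) :
    fderiv ℝ f u v = fderiv ℝ L z d := by
  rw [← hf.lineDeriv_eq_fderiv, ← hL.lineDeriv_eq_fderiv]
  simp only [lineDeriv, h]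

section TwoLayerNet

variable {m p σ : Type*} [Fintype m] [Fintype p] [Fintype σ]

def netOutput (G : m → ℝ) (x : p → ℝ) (w : m → ℝ) (V : m → p → ℝ) (b : m → ℝ) : ℝ :=
  ∑ k, w k * (G k * ((∑ a, V k a * x a) + b k))

def netOutputs (G : σ → m → ℝ) (x : σ → p → ℝ) (w : m → ℝ) (V : m → p → ℝ) (b : m → ℝ) :
    σ → ℝ :=
  fun s => netOutput (G s) (x s) w V b

section

variable (G : m → ℝ) (x : p → ℝ) (w : m → ℝ) (V : m → p → ℝ) (b : m → ℝ) (t : ℝ)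

theorem netOutput_add_smul_outer :
    netOutput G x (w + t • w) V b = netOutput G x w V b + t * netOutput G x w V b := by
  simp only [netOutput, mul_sum, ← sum_add_distrib]
  refine sum_congr rfl fun k _ => ?_
  simp only [Pi.add_apply, Pi.smul_apply, smul_eq_mul]
  ring

theorem netOutput_add_smul_inner :
    netOutput G x w (V + t • V) b = netOutput G x w V b + t * netOutput G x w V 0 := by
  simp only [netOutput, mul_sum, ← sum_add_distrib]
  refine sum_congr rfl fun k _ => ?_
  simp only [Pi.add_apply, Pi.smul_apply, smul_eq_mul, Pi.zero_apply, add_zero, add_mul,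
    sum_add_distrib, mul_assoc, ← mul_sum]
  ring

theorem netOutput_add_smul_bias :
    netOutput G x w V (b + t • b) = netOutput G x w V b + t * netOutput G x w 0 b := by
  simp only [netOutput, mul_sum, ← sum_add_distrib]
  refine sum_congr rfl fun k _ => ?_
  simp only [Pi.add_apply, Pi.smul_apply, smul_eq_mul, Pi.zero_apply, zero_mul, sum_const_zero,
    zero_add]
  ring

theorem netOutput_eq_inner_add_bias :
    netOutput G x w V b = netOutput G x w V 0 + netOutput G x w 0 b := by
  simp only [netOutput, ← sum_add_distrib]
  refine sum_congr rfl fun k _ => ?_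
  simp only [Pi.zero_apply, add_zero, zero_mul, sum_const_zero, zero_add]
  ring

end

theorem fderiv_comp_netOutputs_outer_eq_inner_add_bias (G : σ → m → ℝ) (x : σ → p → ℝ)
    (w : m → ℝ) (V : m → p → ℝ) (b : m → ℝ) {L : (σ → ℝ) → ℝ}
    (hL : DifferentiableAt ℝ L (netOutputs G x w V b)) :
    fderiv ℝ (fun u => L (netOutputs G x u V b)) w w =
      fderiv ℝ (fun M => L (netOutputs G x w M b)) V V +
        fderiv ℝ (fun u => L (netOutputs G x w V u)) b b := by
  have hw : fderiv ℝ (fun u => L (netOutputs G x u V b)) w w =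
      fderiv ℝ L (netOutputs G x w V b) (netOutputs G x w V b) :=
    fderiv_apply_eq_of_add_smul_eq (hL.comp w (by unfold netOutputs netOutput; fun_prop)) hL
      fun t => congrArg L (funext fun s => netOutput_add_smul_outer ..)
  have hV : fderiv ℝ (fun M => L (netOutputs G x w M b)) V V =
      fderiv ℝ L (netOutputs G x w V b) (netOutputs G x w V 0) :=
    fderiv_apply_eq_of_add_smul_eq (hL.comp V (by unfold netOutputs netOutput; fun_prop)) hL
      fun t => congrArg L (funext fun s => netOutput_add_smul_inner ..)
  have hb : fderiv ℝ (fun u => L (netOutputs G x w V u)) b b =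
      fderiv ℝ L (netOutputs G x w V b) (netOutputs G x w 0 b) :=
    fderiv_apply_eq_of_add_smul_eq (hL.comp b (by unfold netOutputs netOutput; fun_prop)) hL
      fun t => congrArg L (funext fun s => netOutput_add_smul_bias ..)
  rw [hw, hV, hb, ← map_add]
  exact congrArg _ (funext fun s => netOutput_eq_inner_add_bias ..)

noncomputable def logisticLoss (y ζ : σ → ℝ) : ℝ :=
  ∑ s, Real.log (1 + Real.exp (-(y s * ζ s)))

theorem differentiable_logisticLoss (y : σ → ℝ) : Differentiable ℝ (logisticLoss y) := by
  unfold logisticLoss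
  fun_prop (disch := intros; positivity)

theorem logisticLoss_netOutputs_sumElim {ι κ : Type*} [Fintype ι] [Fintype κ]
    (GI : ι → m → ℝ) (GJ : κ → m → ℝ) (xI : ι → p → ℝ) (xJ : κ → p → ℝ) (w : m → ℝ)
    (V : m → p → ℝ) (b : m → ℝ) :
    logisticLoss (Sum.elim 1 (-1)) (netOutputs (Sum.elim GI GJ) (Sum.elim xI xJ) w V b) =
      (∑ i, Real.log (1 + Real.exp (-netOutput (GI i) (xI i) w V b))) +
        ∑ j, Real.log (1 + Real.exp (netOutput (GJ j) (xJ j) w V b)) := by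
  simp [logisticLoss, netOutputs, Fintype.sum_sum_type]

end TwoLayerNet

theorem ContinuousLinearMap.apply_eq_sum_apply_single {m M : Type*} [Fintype m] [DecidableEq m]
    {φ : m → Type*} [∀ k, AddCommMonoid (φ k)] [∀ k, TopologicalSpace (φ k)]
    [∀ k, Module ℝ (φ k)]
    [AddCommMonoid M] [TopologicalSpace M] [Module ℝ M]
    (D : (∀ k, φ k) →L[ℝ] M) (u : ∀ k, φ k) : D u = ∑ k, D (Pi.single k (u k)) := by
  rw [← map_sum, Finset.univ_sum_single]

theorem hasDerivAt_sum_sq_of_gradient {m : Type*} [Fintype m] [DecidableEq m]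
    {u : ℝ → m → ℝ} {D : (m → ℝ) →L[ℝ] ℝ} {t : ℝ}
    (h : ∀ k, HasDerivAt (fun τ => u τ k) ((-D) (Pi.single k 1)) t) :
    HasDerivAt (fun τ => ∑ k, u τ k ^ 2) (-(2 * D (u t))) t := by
  refine (HasDerivAt.fun_sum fun k _ => (h k).fun_pow 2).congr_deriv ?_
  rw [D.apply_eq_sum_apply_single, mul_sum, ← sum_neg_distrib]
  refine sum_congr rfl fun k _ => ?_
  have hsingle : Pi.single k (u t k) = u t k • (Pi.single k 1 : m → ℝ) := by
    rw [← Pi.single_smul', smul_eq_mul, mul_one]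
  rw [hsingle, map_smul, smul_eq_mul, neg_apply]
  ring

theorem hasDerivAt_sum_sum_sq_of_gradient {m p : Type*} [Fintype m] [DecidableEq m]
    [Fintype p] [DecidableEq p] {U : ℝ → m → p → ℝ} {D : (m → p → ℝ) →L[ℝ] ℝ} {t : ℝ}
    (h : ∀ k a, HasDerivAt (fun τ => U τ k a) ((-D) (Pi.single k (Pi.single a 1))) t) :
    HasDerivAt (fun τ => ∑ k, ∑ a, U τ k a ^ 2) (-(2 * D (U t))) t := by
  have hrow k := hasDerivAt_sum_sq_of_gradient
    (D := D.comp (ContinuousLinearMap.single ℝ (fun _ => p → ℝ) k)) (h k)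
  refine (HasDerivAt.fun_sum fun k _ => hrow k).congr_deriv ?_
  rw [D.apply_eq_sum_apply_single, mul_sum, ← sum_neg_distrib]
  rfl

theorem stmt9_general {r n : ℕ} {ι κ : Type*} [Fintype ι] [Fintype κ]
    (xI : ι → Fin n → ℝ) (xJ : κ → Fin n → ℝ)
    (GI : ι → Fin r → ℝ) (GJ : κ → Fin r → ℝ)
    (ℓ : (Fin r → ℝ) → (Fin r → Fin n → ℝ) → (Fin r → ℝ) → ℝ)
    (hℓ : ∀ w V b, ℓ w V b =
      (∑ i, Real.log (1 + Real.exp (-(∑ k, w k * (GI i k * ((∑ a, V k a * xI i a) + b k))))))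
      + ∑ j, Real.log (1 + Real.exp (∑ k, w k * (GJ j k * ((∑ a, V k a * xJ j a) + b k)))))
    (w : ℝ → Fin r → ℝ) (V : ℝ → Fin r → Fin n → ℝ) (b : ℝ → Fin r → ℝ)
    -- gradient flow: `dw/dt = −∇_w ℓ`, `dV/dt = −∇_V ℓ`, `db/dt = −∇_b ℓ`
    (hw : ∀ t ≥ (0 : ℝ), ∀ k, HasDerivAt (fun τ => w τ k)
      (-(fderiv ℝ (fun u : Fin r → ℝ => ℓ u (V t) (b t)) (w t)) (Pi.single k 1)) t)
    (hV : ∀ t ≥ (0 : ℝ), ∀ k a, HasDerivAt (fun τ => V τ k a)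
      (-(fderiv ℝ (fun M : Fin r → Fin n → ℝ => ℓ (w t) M (b t)) (V t))
        (Pi.single k (Pi.single a 1))) t)
    (hb : ∀ t ≥ (0 : ℝ), ∀ k, HasDerivAt (fun τ => b τ k)
      (-(fderiv ℝ (fun u : Fin r → ℝ => ℓ (w t) (V t) u) (b t)) (Pi.single k 1)) t) :
    ∀ t ≥ (0 : ℝ),
      (∑ k, (w t k) ^ 2) - (∑ k, ∑ a, (V t k a) ^ 2) - (∑ k, (b t k) ^ 2) =
      (∑ k, (w 0 k) ^ 2) - (∑ k, ∑ a, (V 0 k a) ^ 2) - (∑ k, (b 0 k) ^ 2) := by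
  have hℓ_eq w V b : ℓ w V b = logisticLoss (Sum.elim 1 (-1))
      (netOutputs (Sum.elim GI GJ) (Sum.elim xI xJ) w V b) := by
    rw [hℓ, logisticLoss_netOutputs_sumElim]
    rfl
  have hQ : ∀ τ ≥ (0 : ℝ), HasDerivAt (fun σ => (∑ k, (w σ k) ^ 2) -
      (∑ k, ∑ a, (V σ k a) ^ 2) - (∑ k, (b σ k) ^ 2)) 0 τ := by
    intro τ hτ
    refine (((hasDerivAt_sum_sq_of_gradient (hw τ hτ)).sub
      (hasDerivAt_sum_sum_sq_of_gradient (hV τ hτ))).sub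
      (hasDerivAt_sum_sq_of_gradient (hb τ hτ))).congr_deriv ?_
    have heuler := fderiv_comp_netOutputs_outer_eq_inner_add_bias
      (Sum.elim GI GJ) (Sum.elim xI xJ) (w τ) (V τ) (b τ)
      (differentiable_logisticLoss (Sum.elim 1 (-1)) _)
    simp only [← hℓ_eq] at heuler
    rw [heuler]
    ring
  intro t ht
  exact constant_of_has_deriv_right_zero
    (fun τ hτ => (hQ τ hτ.1).continuousAt.continuousWithinAt)
    (fun τ hτ => (hQ τ hτ.1).hasDerivWithinAt) t ⟨ht, le_rfl⟩

/-- Lemma 2 in the proof of Theorem 3.  Along the gradient flow of the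
two-layer cross-entropy loss with frozen 0/1 activation patterns `G`, the quantity
`‖w‖₂² − ‖V‖_F² − ‖b‖₂²` is conserved. -/
theorem stmt9 {r n : ℕ} {ι κ : Type*} [Fintype ι] [Fintype κ]
    (xI : ι → Fin n → ℝ) (xJ : κ → Fin n → ℝ)
    (GI : ι → Fin r → ℝ) (GJ : κ → Fin r → ℝ)
    (hGI : ∀ i k, GI i k = 0 ∨ GI i k = 1) (hGJ : ∀ j k, GJ j k = 0 ∨ GJ j k = 1)
    (ℓ : (Fin r → ℝ) → (Fin r → Fin n → ℝ) → (Fin r → ℝ) → ℝ)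
    (hℓ : ∀ w V b, ℓ w V b =
      (∑ i, Real.log (1 + Real.exp (-(∑ k, w k * (GI i k * ((∑ a, V k a * xI i a) + b k))))))
      + ∑ j, Real.log (1 + Real.exp (∑ k, w k * (GJ j k * ((∑ a, V k a * xJ j a) + b k)))))
    (w : ℝ → Fin r → ℝ) (V : ℝ → Fin r → Fin n → ℝ) (b : ℝ → Fin r → ℝ)
    -- gradient flow: `dw/dt = −∇_w ℓ`, `dV/dt = −∇_V ℓ`, `db/dt = −∇_b ℓ`
    (hw : ∀ t ≥ (0 : ℝ), ∀ k, HasDerivAt (fun τ => w τ k)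
      (-(fderiv ℝ (fun u : Fin r → ℝ => ℓ u (V t) (b t)) (w t)) (Pi.single k 1)) t)
    (hV : ∀ t ≥ (0 : ℝ), ∀ k a, HasDerivAt (fun τ => V τ k a)
      (-(fderiv ℝ (fun M : Fin r → Fin n → ℝ => ℓ (w t) M (b t)) (V t))
        (Pi.single k (Pi.single a 1))) t)
    (hb : ∀ t ≥ (0 : ℝ), ∀ k, HasDerivAt (fun τ => b τ k)
      (-(fderiv ℝ (fun u : Fin r → ℝ => ℓ (w t) (V t) u) (b t)) (Pi.single k 1)) t) :
    ∀ t ≥ (0 : ℝ),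
      (∑ k, (w t k) ^ 2) - (∑ k, ∑ a, (V t k a) ^ 2) - (∑ k, (b t k) ^ 2) =
      (∑ k, (w 0 k) ^ 2) - (∑ k, ∑ a, (V 0 k a) ^ 2) - (∑ k, (b 0 k) ^ 2) :=
  stmt9_general xI xJ GI GJ ℓ hℓ w V b hw hV hb
end

section
/- Let L ≥ 1 and n_0, …, n_L ∈ ℕ with n_L = 1, let {x_s}_{s∈S} be a finite set of points in ℝ^{n_0} with target values {y_s}_{s∈S} ⊂ ℝ, let d : ℝ × ℝ → ℝ be differentiable in its first argument, and let μ_k > 0 for k ∈ [L]. Define ℓ(W_1, …, W_L) = Σ_{s∈S} d(W_L ⋯ W_1 x_s, y_s) + Σ_{k∈[L]} μ_k ‖W_k‖_F², where W_k ∈ ℝ^{n_k × n_{k−1}}. If (W̄_1, …, W̄_L) is a stationary point of ℓ, i.e. the partial derivative of ℓ with respect to each W_k vanishes at (W̄_1, …, W̄_L), then rank(W̄_k) ≤ 1 for every k ∈ [L]. -/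
/-! Perturbing `W_k` by `ε E_ab` moves the scalar network output on `x_s` by `ε (v_s)_b u_a`,
where `v_s = W_{k-1} ⋯ W_1 x_s` is the input of layer `k` and `u_a` is the output of the layers
above `k` on the basis vector `e_a`. Hence the `(a, b)` partial derivative of the loss is
`u_a g_b + 2 μ_k (W_k)_{ab}` with `g_b = Σ_s ∂₁d(out_s, y_s) (v_s)_b`, and stationarity forces
`W_k = -(2 μ_k)⁻¹ u gᵀ`, a matrix of rank at most one. -/

/-- Forward pass of a deep linear network: `fwd n W x k = W_{k} ⋯ W_1 x` (activations at
layer `k`). -/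
def fwd (n : ℕ → ℕ) (W : ∀ k : ℕ, Matrix (Fin (n (k + 1))) (Fin (n k)) ℝ)
    (x : Fin (n 0) → ℝ) : ∀ k : ℕ, Fin (n k) → ℝ
  | 0 => x
  | k + 1 => (W k).mulVec (fwd n W x k)

open Finset Function Matrix

theorem hasDerivAt_sum_sq_add_smul_single {m p : Type*} [Fintype m] [Fintype p]
    [DecidableEq m] [DecidableEq p] (M : Matrix m p ℝ) (a : m) (b : p) :
    HasDerivAt (fun ε : ℝ => ∑ i, ∑ j, ((M + ε • single a b 1 : Matrix m p ℝ) i j) ^ 2)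
      (2 * M a b) 0 := by
  simp only [Matrix.add_apply, Matrix.smul_apply, smul_eq_mul]
  have h : ∀ i j, HasDerivAt (fun ε : ℝ => (M i j + ε * single a b 1 i j) ^ 2)
      (2 * M i j * single a b 1 i j) 0 := fun i j => by
    simpa using (((hasDerivAt_id (0 : ℝ)).mul_const (single a b (1 : ℝ) i j)).const_add
      (M i j)).fun_pow 2
  refine (HasDerivAt.fun_sum fun i _ => HasDerivAt.fun_sum fun j _ => h i j).congr_deriv ?_
  simp [single_apply, ite_and]

theorem hasDerivAt_sum_comp_add_mul {ι : Type*} [Fintype ι] (f : ι → ℝ → ℝ) (p c : ι → ℝ)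
    (hf : ∀ s, DifferentiableAt ℝ (f s) (p s)) :
    HasDerivAt (fun ε : ℝ => ∑ s, f s (p s + ε * c s)) (∑ s, deriv (f s) (p s) * c s) 0 := by
  refine HasDerivAt.fun_sum fun s _ => ?_
  have hline : HasDerivAt (fun ε : ℝ => p s + ε * c s) (c s) 0 := by
    simpa using ((hasDerivAt_id (0 : ℝ)).mul_const (c s)).const_add (p s)
  exact (hf s).hasDerivAt.comp_of_eq 0 hline (by simp)

theorem rank_le_one_of_eq_mul {m p R : Type*} [Fintype p] [CommRing R] [StrongRankCondition R]
    (M : Matrix m p R) (u : m → R) (v : p → R) (h : ∀ i j, M i j = u i * v j) : M.rank ≤ 1 := by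
  rw [show M = vecMulVec u v from Matrix.ext h]
  exact rank_vecMulVec_le u v

section Propagation

variable {n : ℕ → ℕ}

def propagate (W : ∀ k : ℕ, Matrix (Fin (n (k + 1))) (Fin (n k)) ℝ) (j : ℕ) :
    ∀ m : ℕ, (Fin (n j) → ℝ) →ₗ[ℝ] (Fin (n (j + m)) → ℝ)
  | 0 => LinearMap.id
  | m + 1 => (W (j + m)).mulVecLin ∘ₗ propagate W j m

theorem fwd_add (W : ∀ k : ℕ, Matrix (Fin (n (k + 1))) (Fin (n k)) ℝ)
    (x : Fin (n 0) → ℝ) (j m : ℕ) :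
    fwd n W x (j + m) = propagate W j m (fwd n W x j) := by
  induction m with
  | zero => rfl
  | succ m ih => exact congrArg (W (j + m) *ᵥ ·) ih

theorem propagate_congr {W W' : ∀ k : ℕ, Matrix (Fin (n (k + 1))) (Fin (n k)) ℝ} {j : ℕ}
    (h : ∀ i, j ≤ i → W i = W' i) (m : ℕ) : propagate W j m = propagate W' j m := by
  induction m with
  | zero => rfl
  | succ m ih => simp only [propagate, ih, h (j + m) (by omega)]

theorem fwd_update_of_le (W : ∀ k : ℕ, Matrix (Fin (n (k + 1))) (Fin (n k)) ℝ) {k : ℕ}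
    (M : Matrix (Fin (n (k + 1))) (Fin (n k)) ℝ) (x : Fin (n 0) → ℝ) {m : ℕ} (hm : m ≤ k) :
    fwd n (update W k M) x m = fwd n W x m := by
  induction m with
  | zero => rfl
  | succ m ih =>
    simp only [fwd, update_of_ne (show m ≠ k by omega), ih (by omega)]

theorem fwd_update_add (W : ∀ k : ℕ, Matrix (Fin (n (k + 1))) (Fin (n k)) ℝ) (k t : ℕ)
    (Δ : Matrix (Fin (n (k + 1))) (Fin (n k)) ℝ) (x : Fin (n 0) → ℝ) :
    fwd n (update W k (W k + Δ)) x (k + 1 + t) =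
      fwd n W x (k + 1 + t) + propagate W (k + 1) t (Δ *ᵥ fwd n W x k) := by
  have hlayer : fwd n (update W k (W k + Δ)) x (k + 1) = fwd n W x (k + 1) + Δ *ᵥ fwd n W x k := by
    simp only [fwd, update_self, fwd_update_of_le W _ x le_rfl, add_mulVec]
  rw [fwd_add, fwd_add W, propagate_congr (fun i hi => update_of_ne (by omega) _ W) t, hlayer,
    map_add]

theorem sum_fwd_update_add_smul_single (W : ∀ k : ℕ, Matrix (Fin (n (k + 1))) (Fin (n k)) ℝ)
    (k t : ℕ) (a : Fin (n (k + 1))) (b : Fin (n k)) (ε : ℝ) (x : Fin (n 0) → ℝ) :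
    ∑ i, fwd n (update W k (W k + ε • single a b 1)) x (k + 1 + t) i =
      ∑ i, fwd n W x (k + 1 + t) i +
        ε * (fwd n W x k b * ∑ i, propagate W (k + 1) t (Pi.single a 1) i) := by
  have hsingle : (ε • single a b 1 : Matrix _ _ ℝ) *ᵥ fwd n W x k =
      (ε * fwd n W x k b) • Pi.single a 1 := by
    rw [smul_mulVec, single_mulVec, ← Pi.single, ← Pi.single_smul, ← Pi.single_smul, smul_eq_mul,
      smul_eq_mul, one_mul, mul_one]
  rw [fwd_update_add, hsingle, map_smul]
  simp only [Pi.add_apply, Pi.smul_apply, smul_eq_mul, sum_add_distrib, ← mul_sum]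
  ring

theorem hasDerivAt_weightDecay_update (W : ∀ k : ℕ, Matrix (Fin (n (k + 1))) (Fin (n k)) ℝ)
    (mu : ℕ → ℝ) {K : Finset ℕ} {k : ℕ} (hk : k ∈ K) (a : Fin (n (k + 1))) (b : Fin (n k)) :
    HasDerivAt (fun ε : ℝ => ∑ j ∈ K, mu j *
        ∑ a', ∑ b', (update W k (W k + ε • single a b 1) j a' b') ^ 2)
      (2 * mu k * W k a b) 0 := by
  have hsplit : ∀ ε : ℝ, ∑ j ∈ K, mu j *
      ∑ a', ∑ b', (update W k (W k + ε • single a b 1) j a' b') ^ 2 =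
      mu k * ∑ a', ∑ b', ((W k + ε • single a b 1 : Matrix _ _ ℝ) a' b') ^ 2 +
        ∑ j ∈ K.erase k, mu j * ∑ a', ∑ b', (W j a' b') ^ 2 := by
    intro ε
    rw [← add_sum_erase K _ hk, update_self]
    congr 1
    exact sum_congr rfl fun j hj => by rw [update_of_ne (ne_of_mem_erase hj)]
  rw [funext hsplit]
  exact (((hasDerivAt_sum_sq_add_smul_single (W k) a b).const_mul (mu k)).add_const _).congr_deriv
    (by ring)

end Propagation

theorem stmt10_general {ι : Type*} [Fintype ι] (L : ℕ)
    (n : ℕ → ℕ)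
    (x : ι → Fin (n 0) → ℝ) (y : ι → ℝ)
    (d : ℝ → ℝ → ℝ) (hd : ∀ z : ℝ, Differentiable ℝ (fun u => d u z))
    (mu : ℕ → ℝ) (hmu : ∀ k < L, 0 < mu k)
    (loss : (∀ k : ℕ, Matrix (Fin (n (k + 1))) (Fin (n k)) ℝ) → ℝ)
    (hloss : ∀ Wt, loss Wt =
      (∑ s, d (∑ i, fwd n Wt (x s) L i) (y s)) +
        ∑ k ∈ Finset.range L, mu k * ∑ a, ∑ b, (Wt k a b) ^ 2)
    (W : ∀ k : ℕ, Matrix (Fin (n (k + 1))) (Fin (n k)) ℝ)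
    -- stationarity: every partial derivative of the loss vanishes at `W`
    (hstat : ∀ k < L, ∀ (a : Fin (n (k + 1))) (b : Fin (n k)),
      HasDerivAt
        (fun ε : ℝ => loss (Function.update W k (W k + ε • Matrix.single a b 1)))
        0 0) :
    ∀ k < L, (W k).rank ≤ 1 := by
  intro k hk
  obtain ⟨t, rfl⟩ : ∃ t, L = k + 1 + t := ⟨L - (k + 1), by omega⟩
  set out : ι → ℝ := fun s => ∑ i, fwd n W (x s) (k + 1 + t) i
  set u : Fin (n (k + 1)) → ℝ := fun a => ∑ i, propagate W (k + 1) t (Pi.single a 1) i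
  set g : Fin (n k) → ℝ := fun b => ∑ s, deriv (fun z => d z (y s)) (out s) * fwd n W (x s) k b
  have hstationary : ∀ a b, g b * u a + 2 * mu k * W k a b = 0 := by
    intro a b
    have hline := (hasDerivAt_sum_comp_add_mul (fun s z => d z (y s)) out
      (fun s => fwd n W (x s) k b * u a) fun s => hd (y s) _).add
        (hasDerivAt_weightDecay_update W mu (mem_range.2 hk) a b)
    have h0 := hstat k hk a b
    simp_rw [hloss, sum_fwd_update_add_smul_single] at h0
    calc g b * u a + 2 * mu k * W k a b
        = ∑ s, deriv (fun z => d z (y s)) (out s) * (fwd n W (x s) k b * u a) +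
            2 * mu k * W k a b := by simp only [g, sum_mul, mul_assoc]
      _ = 0 := (h0.unique hline).symm
  refine rank_le_one_of_eq_mul (W k) u (fun b => -g b / (2 * mu k)) fun a b => ?_
  have hmuk := hmu k hk
  field_simp
  linarith [hstationary a b]

/-- deterministic content of Theorem 4.  At any stationary point of the
weight-decay–regularized deep linear network loss
`ℓ(W₁,…,W_L) = Σ_s d(W_L ⋯ W_1 x_s, y_s) + Σ_k μ_k ‖W_k‖_F²` (with scalar output,
`n_L = 1`, `μ_k > 0`, and `d` differentiable in its first argument), every weight matrix
has rank at most 1. -/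
theorem stmt10 {ι : Type*} [Fintype ι] (L : ℕ) (hL : 1 ≤ L)
    (n : ℕ → ℕ) (hnL : n L = 1)
    (x : ι → Fin (n 0) → ℝ) (y : ι → ℝ)
    (d : ℝ → ℝ → ℝ) (hd : ∀ z : ℝ, Differentiable ℝ (fun u => d u z))
    (mu : ℕ → ℝ) (hmu : ∀ k < L, 0 < mu k)
    (loss : (∀ k : ℕ, Matrix (Fin (n (k + 1))) (Fin (n k)) ℝ) → ℝ)
    (hloss : ∀ Wt, loss Wt =
      (∑ s, d (∑ i, fwd n Wt (x s) L i) (y s)) +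
        ∑ k ∈ Finset.range L, mu k * ∑ a, ∑ b, (Wt k a b) ^ 2)
    (W : ∀ k : ℕ, Matrix (Fin (n (k + 1))) (Fin (n k)) ℝ)
    -- stationarity: every partial derivative of the loss vanishes at `W`
    (hstat : ∀ k < L, ∀ (a : Fin (n (k + 1))) (b : Fin (n k)),
      HasDerivAt
        (fun ε : ℝ => loss (Function.update W k (W k + ε • Matrix.single a b 1)))
        0 0) :
    ∀ k < L, (W k).rank ≤ 1 :=
  stmt10_general L n x y d hd mu hmu loss hloss W hstat
end

section
/- Let p, q ∈ [1, ∞] with 1/p + 1/q = 1, let w, x ∈ ℝⁿ, y ∈ ℝ and ε ≥ 0. Then min_{‖d‖_q ≤ ε} wᵀ(x + d) = wᵀ x − ε ‖w‖_p and max_{‖d‖_q ≤ ε} wᵀ(x + d) = wᵀ x + ε ‖w‖_p, and consequently (1/2) ( y − min_{‖d‖_q ≤ ε} wᵀ(x + d) )² + (1/2) ( y − max_{‖d‖_q ≤ ε} wᵀ(x + d) )² = (y − wᵀ x)² + ε² ‖w‖_p². -/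
/-!
By Hölder's inequality the linear form `d ↦ ∑ j, w j * d j` is bounded by `ε ‖w‖_p` on the ball
`‖d‖_q ≤ ε`, and the bound is attained: by a signed basis vector at an entry of maximal modulus
when `p = ∞`, by the sign vector of `w` when `p = 1`, and by the extremal vector of
`NNReal.isGreatest_Lp` otherwise. The form is odd, so `-ε ‖w‖_p` is attained too, which gives the
infimum and supremum; the last identity is then `(a - b)² + (a + b)² = 2a² + 2b²`.
-/

open scoped ENNReal

/-- The `ℓ^p` norm on `Fin n → ℝ`, for `p ∈ [1, ∞]` (via the `PiLp` norm). -/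
noncomputable def pnorm (p : ℝ≥0∞) {n : ℕ} (v : Fin n → ℝ) : ℝ :=
  ‖(WithLp.equiv p (Fin n → ℝ)).symm v‖

open Finset WithLp

lemma SignType.abs_coe_le_one {α : Type*} [Ring α] [LinearOrder α] [IsStrictOrderedRing α]
    (s : SignType) : |(s : α)| ≤ 1 := by
  cases s <;> simp

namespace PiLp

variable {ι : Type*} [Fintype ι]

lemma abs_sum_mul_le_norm_mul_norm_top_one (w d : ι → ℝ) :
    |∑ i, w i * d i| ≤ ‖toLp ∞ w‖ * ‖toLp 1 d‖ :=
  calc |∑ i, w i * d i| ≤ ∑ i, |w i| * |d i| := by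
        simpa only [abs_mul] using abs_sum_le_sum_abs (fun i => w i * d i) univ
    _ ≤ ∑ i, ‖toLp ∞ w‖ * |d i| := by
        gcongr with i
        exact norm_apply_le (toLp ∞ w) i
    _ = ‖toLp ∞ w‖ * ‖toLp 1 d‖ := by
        rw [norm_eq_of_L1, mul_sum]
        rfl

lemma abs_sum_mul_le_norm_mul_norm (p q : ℝ≥0∞) [p.HolderConjugate q] (w d : ι → ℝ) :
    |∑ i, w i * d i| ≤ ‖toLp p w‖ * ‖toLp q d‖ := by
  rcases eq_or_ne p ∞ with rfl | hp
  · obtain rfl : q = 1 := (ENNReal.HolderConjugate.eq_top_iff_eq_one ∞ q).1 rfl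
    exact abs_sum_mul_le_norm_mul_norm_top_one w d
  rcases eq_or_ne q ∞ with rfl | hq
  · obtain rfl : p = 1 := (ENNReal.HolderConjugate.eq_top_iff_eq_one ∞ p).1 rfl
    simpa only [mul_comm] using abs_sum_mul_le_norm_mul_norm_top_one d w
  have hpq := ENNReal.HolderConjugate.toReal_of_ne_top hp hq
  calc |∑ i, w i * d i| ≤ ∑ i, |w i| * |d i| := by
        simpa only [abs_mul] using abs_sum_le_sum_abs (fun i => w i * d i) univ
    _ ≤ (∑ i, |w i| ^ p.toReal) ^ (1 / p.toReal) * (∑ i, |d i| ^ q.toReal) ^ (1 / q.toReal) := by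
        simpa only [abs_abs] using Real.inner_le_Lp_mul_Lq univ (|w ·|) (|d ·|) hpq
    _ = ‖toLp p w‖ * ‖toLp q d‖ := by
        rw [norm_eq_sum hpq.pos, norm_eq_sum hpq.symm.pos]
        rfl

lemma exists_norm_le_one_sum_mul_eq_norm_top_one (w : ι → ℝ) :
    ∃ d : ι → ℝ, ‖toLp 1 d‖ ≤ 1 ∧ ∑ i, w i * d i = ‖toLp ∞ w‖ := by
  cases isEmpty_or_nonempty ι
  · exact ⟨0, by simp, by simp [Subsingleton.elim w 0]⟩
  classical
  obtain ⟨i₀, hi₀⟩ := Finite.exists_max fun i => |w i|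
  have hw : ‖toLp ∞ w‖ = |w i₀| := by
    refine le_antisymm ?_ (norm_apply_le (toLp ∞ w) i₀)
    rw [norm_toLp]
    exact (pi_norm_le_iff_of_nonneg (abs_nonneg _)).2 hi₀
  refine ⟨Pi.single i₀ (SignType.sign (w i₀)), ?_, ?_⟩
  · rw [toLp_single, norm_single]
    exact SignType.abs_coe_le_one _
  · simp [Pi.single_apply, hw, self_mul_sign]

lemma exists_norm_le_one_sum_mul_eq_norm_one_top (w : ι → ℝ) :
    ∃ d : ι → ℝ, ‖toLp ∞ d‖ ≤ 1 ∧ ∑ i, w i * d i = ‖toLp 1 w‖ := by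
  refine ⟨fun i => SignType.sign (w i), ?_, ?_⟩
  · rw [norm_toLp]
    exact (pi_norm_le_iff_of_nonneg zero_le_one).2 fun i => SignType.abs_coe_le_one _
  · simp [norm_eq_of_L1, self_mul_sign]

lemma exists_norm_le_one_sum_mul_eq_norm (p q : ℝ≥0∞) [p.HolderConjugate q] (w : ι → ℝ) :
    ∃ d : ι → ℝ, ‖toLp q d‖ ≤ 1 ∧ ∑ i, w i * d i = ‖toLp p w‖ := by
  rcases eq_or_ne p ∞ with rfl | hp
  · obtain rfl : q = 1 := (ENNReal.HolderConjugate.eq_top_iff_eq_one ∞ q).1 rfl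
    exact exists_norm_le_one_sum_mul_eq_norm_top_one w
  rcases eq_or_ne q ∞ with rfl | hq
  · obtain rfl : p = 1 := (ENNReal.HolderConjugate.eq_top_iff_eq_one ∞ p).1 rfl
    exact exists_norm_le_one_sum_mul_eq_norm_one_top w
  have hpq := ENNReal.HolderConjugate.toReal_of_ne_top hp hq
  obtain ⟨g, hg : ∑ i, g i ^ q.toReal ≤ 1, hgw : ∑ i, ‖w i‖₊ * g i = _⟩ :=
    (NNReal.isGreatest_Lp univ (fun i => ‖w i‖₊) hpq).1
  have : Fact (1 ≤ p) := ⟨ENNReal.HolderConjugate.one_le p q⟩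
  have : Fact (1 ≤ q) := ⟨ENNReal.HolderConjugate.one_le q p⟩
  refine ⟨fun i => SignType.sign (w i) * g i, ?_, ?_⟩
  · rw [← coe_nnnorm, ← NNReal.coe_one, NNReal.coe_le_coe, nnnorm_eq_sum hq]
    refine NNReal.rpow_le_one ((sum_le_sum fun i _ => ?_).trans hg) hpq.symm.one_div_pos.le
    gcongr
    rw [← NNReal.coe_le_coe, coe_nnnorm, toLp_apply, norm_mul, Real.norm_eq_abs,
      Real.norm_eq_abs, NNReal.abs_eq]
    exact mul_le_of_le_one_left (g i).2 (SignType.abs_coe_le_one _)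
  · calc ∑ i, w i * (SignType.sign (w i) * g i) = ((∑ i, ‖w i‖₊ * g i : NNReal) : ℝ) := by
          push_cast
          simp only [← mul_assoc, self_mul_sign, Real.norm_eq_abs]
      _ = ‖toLp p w‖ := by
          rw [hgw, ← coe_nnnorm (toLp p w), nnnorm_eq_sum hp]

lemma exists_norm_le_sum_mul_eq_mul_norm (p q : ℝ≥0∞) [p.HolderConjugate q] (w : ι → ℝ)
    {ε : ℝ} (hε : 0 ≤ ε) : ∃ d : ι → ℝ, ‖toLp q d‖ ≤ ε ∧ ∑ i, w i * d i = ε * ‖toLp p w‖ := by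
  have : Fact (1 ≤ q) := ⟨ENNReal.HolderConjugate.one_le q p⟩
  obtain ⟨d, hd, hwd⟩ := exists_norm_le_one_sum_mul_eq_norm p q w
  refine ⟨ε • d, ?_, ?_⟩
  · rw [toLp_smul, norm_smul, Real.norm_of_nonneg hε]
    exact mul_le_of_le_one_right hε hd
  · simp only [Pi.smul_apply, smul_eq_mul, mul_left_comm _ ε, ← mul_sum, hwd]

end PiLp

lemma pnorm_eq_norm_toLp (p : ℝ≥0∞) {n : ℕ} (v : Fin n → ℝ) : pnorm p v = ‖toLp p v‖ := rfl

lemma csInf_eq_sub_and_csSup_eq_add {S : Set ℝ} {c r : ℝ} (hS : ∀ z ∈ S, |z - c| ≤ r)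
    (hlow : c - r ∈ S) (hhigh : c + r ∈ S) : sInf S = c - r ∧ sSup S = c + r :=
  ⟨IsLeast.csInf_eq ⟨hlow, fun z hz => by linarith [(abs_le.1 (hS z hz)).1]⟩,
    IsGreatest.csSup_eq ⟨hhigh, fun z hz => by linarith [(abs_le.1 (hS z hz)).2]⟩⟩

lemma sInf_and_sSup_perturbed_sum_mul {n : ℕ} (p q : ℝ≥0∞) [p.HolderConjugate q]
    (w x : Fin n → ℝ) {ε : ℝ} (hε : 0 ≤ ε) :
    sInf {z : ℝ | ∃ d : Fin n → ℝ, pnorm q d ≤ ε ∧ z = ∑ j, w j * (x j + d j)}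
        = (∑ j, w j * x j) - ε * pnorm p w ∧
    sSup {z : ℝ | ∃ d : Fin n → ℝ, pnorm q d ≤ ε ∧ z = ∑ j, w j * (x j + d j)}
        = (∑ j, w j * x j) + ε * pnorm p w := by
  have hsplit (d : Fin n → ℝ) : ∑ j, w j * (x j + d j) = ∑ j, w j * x j + ∑ j, w j * d j := by
    simp only [mul_add, sum_add_distrib]
  have : Fact (1 ≤ p) := ⟨ENNReal.HolderConjugate.one_le p q⟩
  have : Fact (1 ≤ q) := ⟨ENNReal.HolderConjugate.one_le q p⟩
  obtain ⟨d, hd, hwd⟩ := PiLp.exists_norm_le_sum_mul_eq_mul_norm p q w hε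
  apply csInf_eq_sub_and_csSup_eq_add
  · rintro _ ⟨d', hd', rfl⟩
    rw [hsplit, add_sub_cancel_left, mul_comm]
    calc _ ≤ pnorm p w * pnorm q d' := PiLp.abs_sum_mul_le_norm_mul_norm p q w d'
      _ ≤ pnorm p w * ε := by gcongr; exact norm_nonneg (toLp p w)
  · refine ⟨-d, ?_, ?_⟩
    · rwa [pnorm_eq_norm_toLp, toLp_neg, norm_neg]
    · simp only [hsplit, Pi.neg_apply, mul_neg, sum_neg_distrib, pnorm_eq_norm_toLp, hwd,
        sub_eq_add_neg]
  · exact ⟨d, hd, by rw [hsplit, hwd, pnorm_eq_norm_toLp]⟩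

theorem stmt14_general {n : ℕ} (p q : ℝ≥0∞) (hpq : 1 / p + 1 / q = 1)
    (w x : Fin n → ℝ) (y : ℝ) (ε : ℝ) (hε : 0 ≤ ε) :
    sInf {z : ℝ | ∃ d : Fin n → ℝ, pnorm q d ≤ ε ∧ z = ∑ j, w j * (x j + d j)}
        = (∑ j, w j * x j) - ε * pnorm p w ∧
    sSup {z : ℝ | ∃ d : Fin n → ℝ, pnorm q d ≤ ε ∧ z = ∑ j, w j * (x j + d j)}
        = (∑ j, w j * x j) + ε * pnorm p w ∧
    (1 / 2) * (y - sInf {z : ℝ | ∃ d : Fin n → ℝ, pnorm q d ≤ ε ∧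
          z = ∑ j, w j * (x j + d j)}) ^ 2
      + (1 / 2) * (y - sSup {z : ℝ | ∃ d : Fin n → ℝ, pnorm q d ≤ ε ∧
          z = ∑ j, w j * (x j + d j)}) ^ 2
      = (y - ∑ j, w j * x j) ^ 2 + ε ^ 2 * (pnorm p w) ^ 2 := by
  have : p.HolderConjugate q := ENNReal.holderConjugate_iff.2 (by simpa only [one_div] using hpq)
  obtain ⟨hInf, hSup⟩ := sInf_and_sSup_perturbed_sum_mul p q w x hε
  refine ⟨hInf, hSup, ?_⟩
  rw [hInf, hSup]
  ring

/-- For conjugate exponents `p, q`, the minimum and maximum of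
`wᵀ(x + d)` over the `q`-norm ball `‖d‖_q ≤ ε` are `wᵀx ∓ ε ‖w‖_p`, and consequently the
symmetric two-sided perturbation objective equals `(y − wᵀx)² + ε² ‖w‖_p²`. -/
theorem stmt14 {n : ℕ} (p q : ℝ≥0∞) (hp : 1 ≤ p) (hq : 1 ≤ q) (hpq : 1 / p + 1 / q = 1)
    (w x : Fin n → ℝ) (y : ℝ) (ε : ℝ) (hε : 0 ≤ ε) :
    sInf {z : ℝ | ∃ d : Fin n → ℝ, pnorm q d ≤ ε ∧ z = ∑ j, w j * (x j + d j)}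
        = (∑ j, w j * x j) - ε * pnorm p w ∧
    sSup {z : ℝ | ∃ d : Fin n → ℝ, pnorm q d ≤ ε ∧ z = ∑ j, w j * (x j + d j)}
        = (∑ j, w j * x j) + ε * pnorm p w ∧
    (1 / 2) * (y - sInf {z : ℝ | ∃ d : Fin n → ℝ, pnorm q d ≤ ε ∧
          z = ∑ j, w j * (x j + d j)}) ^ 2
      + (1 / 2) * (y - sSup {z : ℝ | ∃ d : Fin n → ℝ, pnorm q d ≤ ε ∧
          z = ∑ j, w j * (x j + d j)}) ^ 2
      = (y - ∑ j, w j * x j) ^ 2 + ε ^ 2 * (pnorm p w) ^ 2 :=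
  stmt14_general p q hpq w x y ε hε
end
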